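/- arXiv:2311.12191 — 2 statements merged into one kernel-verified Lean document; each statement's English description precedes it below -/
import Mathlib

section
/- In an orthogonal lub-complete poset, the Kalmbach implication satisfies: if x ≤ y then x →_K y = (x ∨ y') ∨ Max L(x',y); if x ⊥ y then x →_K y = y ∨ Max L(x',y'); if y ≤ x then x →_K y = x' ∨ (x ∧ Min U(x',y)). Moreover x →_K 1 = {x ∨ x'}, 1 →_K x = {x}, x →_K 0 = {x'}, and 0 →_K x = {x ∨ x'}. -/
open Set

variable {P : Type*} [PartialOrder P] [BoundedOrder P]

/-- Maximal elements of a subset of a poset. -/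
def MaxE (A : Set P) : Set P := {m | m ∈ A ∧ ∀ x ∈ A, m ≤ x → x = m}

/-- Minimal elements of a subset of a poset. -/
def MinE (A : Set P) : Set P := {m | m ∈ A ∧ ∀ x ∈ A, x ≤ m → x = m}

/-- `c` is an antitone involution. -/
def HasAntitoneInvol (c : P → P) : Prop :=
  (∀ x y : P, x ≤ y → c y ≤ c x) ∧ ∀ x : P, c (c x) = x

/-- Orthogonality: the join of two orthogonal elements exists. -/
def IsOrthogonalPoset (c : P → P) : Prop :=
  ∀ x y : P, x ≤ c y → ∃ z, IsLUB {x, y} z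

/-- lub-complete (together with its dual, mub-complete): every lower bound of a
finite set lies below a maximal lower bound, and dually. -/
def IsLubComplete : Prop :=
  (∀ A : Set P, A.Finite → ∀ x ∈ lowerBounds A, ∃ m ∈ MaxE (lowerBounds A), x ≤ m) ∧
  (∀ A : Set P, A.Finite → ∀ x ∈ upperBounds A, ∃ m ∈ MinE (upperBounds A), m ≤ x)

/-- Distributivity of a poset via the LU-identity L(U(x,y),z) = LU(L(x,z),L(y,z)). -/
def IsDistribPoset : Prop :=
  ∀ x y z : P, lowerBounds (upperBounds {x, y} ∪ {z}) =
    lowerBounds (upperBounds (lowerBounds ({x, z} : Set P) ∪ lowerBounds ({y, z} : Set P)))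

/-- `c x` is a complement of `x`: L(x, x') = L(P) and U(x, x') = U(P). -/
def IsComplementedBy (c : P → P) : Prop :=
  ∀ x : P, lowerBounds ({x, c x} : Set P) = lowerBounds (univ : Set P) ∧
    upperBounds ({x, c x} : Set P) = upperBounds (univ : Set P)

/-- Orthocomplemented: x ∨ x' = 1 for all x. -/
def IsOrthocomplemented (c : P → P) : Prop := ∀ x : P, IsLUB {x, c x} ⊤

/-- Paraorthomodular: x ≤ y and x' ∧ y = 0 imply x = y. -/
def IsParaOM (c : P → P) : Prop :=
  ∀ x y : P, x ≤ y → IsGLB {c x, y} ⊥ → x = y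

/-- Orthomodular poset: orthogonal and x ≤ y implies x ∨ (y ∧ x') = y. -/
def IsOM (c : P → P) : Prop :=
  IsOrthogonalPoset c ∧ ∀ x y : P, x ≤ y → ∃ m, IsGLB {y, c x} m ∧ IsLUB {x, m} y

/-- Weakly Boolean: x ∧ y = 0 and x ∧ y' = 0 imply x = 0. -/
def IsWeaklyBoolean (c : P → P) : Prop :=
  ∀ x y : P, IsGLB {x, y} ⊥ → IsGLB {x, c y} ⊥ → x = ⊥

/-- Classical implication x →_C y := Min U(x', y). -/
def impC (c : P → P) (x y : P) : Set P := MinE (upperBounds ({c x, y} : Set P))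

/-- Sasaki implication x →_S y := x' ∨ Max L(x, y). -/
def impS (c : P → P) (x y : P) : Set P :=
  {z | ∃ w ∈ MaxE (lowerBounds ({x, y} : Set P)), IsLUB {c x, w} z}

/-- Dishkant implication x →_D y := y ∨ Max L(x', y'). -/
def impD (c : P → P) (x y : P) : Set P :=
  {z | ∃ w ∈ MaxE (lowerBounds ({c x, c y} : Set P)), IsLUB {y, w} z}

/-- Kalmbach implication
x →_K y := Max L(x',y) ∨ Max L(x',y') ∨ (x ∧ Min U(x',y)). -/
def impK (c : P → P) (x y : P) : Set P :=
  {z | ∃ a ∈ MaxE (lowerBounds ({c x, y} : Set P)),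
       ∃ b ∈ MaxE (lowerBounds ({c x, c y} : Set P)),
       ∃ u ∈ MinE (upperBounds ({c x, y} : Set P)),
       ∃ m, IsGLB {x, u} m ∧ IsLUB {a, b, m} z}

/-- Non-tolens implication x →_N y := y' →_K x'. -/
def impN (c : P → P) (x y : P) : Set P := impK c (c y) (c x)


section AuxStmt10

variable {c : P → P}

lemma ainv_c_top (h : HasAntitoneInvol c) : c (⊤ : P) = ⊥ :=
  le_antisymm (by simpa [h.2] using h.1 (c ⊥) ⊤ le_top) bot_le

lemma ainv_c_bot (h : HasAntitoneInvol c) : c (⊥ : P) = ⊤ := by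
  rw [← ainv_c_top h, h.2]

lemma mem_lb_pair {p q w : P} : w ∈ lowerBounds ({p, q} : Set P) ↔ w ≤ p ∧ w ≤ q := by
  simp [lowerBounds]

lemma mem_ub_pair {p q w : P} : w ∈ upperBounds ({p, q} : Set P) ↔ p ≤ w ∧ q ≤ w := by
  simp [upperBounds]

lemma mem_ub_triple {p q r w : P} :
    w ∈ upperBounds ({p, q, r} : Set P) ↔ p ≤ w ∧ q ≤ w ∧ r ≤ w := by
  simp [upperBounds]

lemma maxE_lb_pair {p q : P} (h : q ≤ p) :
    MaxE (lowerBounds ({p, q} : Set P)) = {q} := by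
  ext m
  simp only [MaxE, mem_setOf_eq, mem_lb_pair, mem_singleton_iff]
  constructor
  · rintro ⟨⟨_, hmq⟩, hmax⟩
    exact (hmax q ⟨h, le_rfl⟩ hmq).symm
  · rintro rfl
    exact ⟨⟨h, le_rfl⟩, fun w hw hqw => le_antisymm hw.2 hqw⟩

lemma minE_ub_pair {p q : P} (h : q ≤ p) :
    MinE (upperBounds ({p, q} : Set P)) = {p} := by
  ext m
  simp only [MinE, mem_setOf_eq, mem_ub_pair, mem_singleton_iff]
  constructor
  · rintro ⟨⟨hpm, _⟩, hmin⟩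
    exact (hmin p ⟨le_rfl, h⟩ hpm).symm
  · rintro rfl
    exact ⟨⟨le_rfl, h⟩, fun w hw hwp => le_antisymm hwp hw.1⟩

lemma isLUB_congr' {s t : Set P} (h : upperBounds s = upperBounds t) {z : P} :
    IsLUB s z ↔ IsLUB t z := by unfold IsLUB; rw [h]

lemma isGLB_pair_left {a b : P} (h : a ≤ b) : IsGLB ({a, b} : Set P) a :=
  ⟨mem_lb_pair.mpr ⟨le_rfl, h⟩, fun w hw => (mem_lb_pair.mp hw).1⟩

lemma ub_triple_fst_le {a b m : P} (h : a ≤ b) :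
    upperBounds ({a, b, m} : Set P) = upperBounds {b, m} := by
  ext w
  simp only [mem_ub_triple, mem_ub_pair]
  exact ⟨fun ⟨_, h2, h3⟩ => ⟨h2, h3⟩, fun ⟨h2, h3⟩ => ⟨h.trans h2, h2, h3⟩⟩

lemma ub_triple_last_le {a b m : P} (h : m ≤ b) :
    upperBounds ({a, b, m} : Set P) = upperBounds {a, b} := by
  ext w
  simp only [mem_ub_triple, mem_ub_pair]
  exact ⟨fun ⟨h1, h2, _⟩ => ⟨h1, h2⟩, fun ⟨h1, h2⟩ => ⟨h1, h2, h.trans h2⟩⟩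

lemma exists_maxE_lb (hlub : IsLubComplete (P := P)) (p q : P) :
    ∃ a, a ∈ MaxE (lowerBounds ({p, q} : Set P)) := by
  obtain ⟨a, ha, -⟩ := hlub.1 {p, q} ((Set.finite_singleton q).insert p) ⊥
    (fun x _ => bot_le)
  exact ⟨a, ha⟩

lemma exists_minE_ub (hlub : IsLubComplete (P := P)) (p q : P) :
    ∃ u, u ∈ MinE (upperBounds ({p, q} : Set P)) := by
  obtain ⟨u, hu, -⟩ := hlub.2 {p, q} ((Set.finite_singleton q).insert p) ⊤
    (fun x _ => le_top)
  exact ⟨u, hu⟩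

lemma exists_isGLB_self_compl (hinv : HasAntitoneInvol c) (horth : IsOrthogonalPoset c)
    (x : P) : ∃ m, IsGLB ({x, c x} : Set P) m := by
  obtain ⟨s, hs⟩ := horth x (c x) (by rw [hinv.2])
  have hxs : x ≤ s := (mem_ub_pair.mp hs.1).1
  have hcxs : c x ≤ s := (mem_ub_pair.mp hs.1).2
  refine ⟨c s, mem_lb_pair.mpr ⟨?_, hinv.1 _ _ hxs⟩, fun w hw => ?_⟩
  · have := hinv.1 _ _ hcxs
    rwa [hinv.2] at this
  · obtain ⟨hwx, hwcx⟩ := mem_lb_pair.mp hw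
    have h1 : c x ≤ c w := hinv.1 _ _ hwx
    have h2 : x ≤ c w := by
      have := hinv.1 _ _ hwcx
      rwa [hinv.2] at this
    have h3 : s ≤ c w := hs.2 (mem_ub_pair.mpr ⟨h2, h1⟩)
    have := hinv.1 _ _ h3
    rwa [hinv.2] at this

lemma le_of_mem_maxE (hinv : HasAntitoneInvol c) (horth : IsOrthogonalPoset c)
    {A : Set P} {b m : P} (hb : b ∈ MaxE (lowerBounds A)) (hm : m ∈ lowerBounds A)
    (hbm : b ≤ c m) : m ≤ b := by
  obtain ⟨w, hw⟩ := horth b m hbm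
  have hwA : w ∈ lowerBounds A := fun p hp =>
    hw.2 (mem_ub_pair.mpr ⟨hb.1 hp, hm hp⟩)
  have hbw : b ≤ w := (mem_ub_pair.mp hw.1).1
  have hmw : m ≤ w := (mem_ub_pair.mp hw.1).2
  have : w = b := hb.2 w hwA hbw
  exact this ▸ hmw

end AuxStmt10

/-- case description of the Kalmbach implication and its values at 0 and 1. -/
theorem stmt10 (c : P → P) (hinv : HasAntitoneInvol c) (horth : IsOrthogonalPoset c)
    (hlub : IsLubComplete (P := P)) :
    ∀ x y : P,
      (x ≤ y → ∀ s : P, IsLUB ({x, c y} : Set P) s →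
        impK c x y = {z | ∃ a ∈ MaxE (lowerBounds ({c x, y} : Set P)), IsLUB {s, a} z}) ∧
      (x ≤ c y →
        impK c x y = {z | ∃ b ∈ MaxE (lowerBounds ({c x, c y} : Set P)), IsLUB {y, b} z}) ∧
      (y ≤ x →
        impK c x y = {z | ∃ u ∈ MinE (upperBounds ({c x, y} : Set P)),
          ∃ m, IsGLB ({x, u} : Set P) m ∧ IsLUB {c x, m} z}) ∧
      (∀ s : P, IsLUB ({x, c x} : Set P) s → impK c x ⊤ = {s} ∧ impK c ⊥ x = {s}) ∧
      impK c ⊤ x = {x} ∧ impK c x ⊥ = {c x} := by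
  intro x y
  refine ⟨?_, ?_, ?_, ?_, ?_, ?_⟩
  · -- x ≤ y
    intro hxy s hs
    have hcyx : c y ≤ c x := hinv.1 _ _ hxy
    have hub : ∀ a : P, upperBounds ({a, c y, x} : Set P) = upperBounds {s, a} := by
      intro a
      ext w
      simp only [mem_ub_triple, mem_ub_pair]
      constructor
      · rintro ⟨h1, h2, h3⟩
        exact ⟨hs.2 (mem_ub_pair.mpr ⟨h3, h2⟩), h1⟩
      · rintro ⟨hsw, haw⟩
        exact ⟨haw, ((mem_ub_pair.mp hs.1).2).trans hsw, ((mem_ub_pair.mp hs.1).1).trans hsw⟩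
    ext z
    simp only [impK, mem_setOf_eq]
    constructor
    · rintro ⟨a, ha, b, hb, u, hu, m, hm, hz⟩
      rw [maxE_lb_pair hcyx, mem_singleton_iff] at hb
      subst hb
      have hxu : x ≤ u := hxy.trans (mem_ub_pair.mp hu.1).2
      have hmx : m = x := hm.unique (isGLB_pair_left hxu)
      subst m
      exact ⟨a, ha, (isLUB_congr' (hub a)).mp hz⟩
    · rintro ⟨a, ha, hz⟩
      obtain ⟨u, hu⟩ := exists_minE_ub hlub (c x) y
      have hxu : x ≤ u := hxy.trans (mem_ub_pair.mp hu.1).2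
      refine ⟨a, ha, c y, ?_, u, hu, x, isGLB_pair_left hxu, (isLUB_congr' (hub a)).mpr hz⟩
      rw [maxE_lb_pair hcyx]
      exact mem_singleton _
  · -- x ⊥ y
    intro hxy
    have hyx : y ≤ c x := by
      have := hinv.1 _ _ hxy
      rwa [hinv.2] at this
    have key : ∀ b m : P, b ∈ MaxE (lowerBounds ({c x, c y} : Set P)) →
        IsGLB ({x, c x} : Set P) m → m ≤ b := by
      intro b m hb hm
      obtain ⟨hmx, hmcx⟩ := mem_lb_pair.mp hm.1
      refine le_of_mem_maxE hinv horth hb (mem_lb_pair.mpr ⟨hmcx, hmx.trans hxy⟩) ?_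
      exact ((mem_lb_pair.mp hb.1).1).trans (hinv.1 _ _ hmx)
    ext z
    simp only [impK, mem_setOf_eq]
    constructor
    · rintro ⟨a, ha, b, hb, u, hu, m, hm, hz⟩
      rw [maxE_lb_pair hyx, mem_singleton_iff] at ha
      subst a
      rw [minE_ub_pair hyx, mem_singleton_iff] at hu
      subst hu
      exact ⟨b, hb, (isLUB_congr' (ub_triple_last_le (key b m hb hm))).mp hz⟩
    · rintro ⟨b, hb, hz⟩
      obtain ⟨m, hm⟩ := exists_isGLB_self_compl hinv horth x
      refine ⟨y, ?_, b, hb, c x, ?_, m, hm,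
        (isLUB_congr' (ub_triple_last_le (key b m hb hm))).mpr hz⟩
      · rw [maxE_lb_pair hyx]; exact mem_singleton _
      · rw [minE_ub_pair hyx]; exact mem_singleton _
  · -- y ≤ x
    intro hyx
    have hcxy : c x ≤ c y := hinv.1 _ _ hyx
    ext z
    simp only [impK, mem_setOf_eq]
    constructor
    · rintro ⟨a, ha, b, hb, u, hu, m, hm, hz⟩
      rw [Set.pair_comm, maxE_lb_pair hcxy, mem_singleton_iff] at hb
      subst hb
      have hax : a ≤ c x := (mem_lb_pair.mp ha.1).1
      exact ⟨u, hu, m, hm, (isLUB_congr' (ub_triple_fst_le hax)).mp hz⟩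
    · rintro ⟨u, hu, m, hm, hz⟩
      obtain ⟨a, ha⟩ := exists_maxE_lb hlub (c x) y
      have hax : a ≤ c x := (mem_lb_pair.mp ha.1).1
      refine ⟨a, ha, c x, ?_, u, hu, m, hm, (isLUB_congr' (ub_triple_fst_le hax)).mpr hz⟩
      rw [Set.pair_comm, maxE_lb_pair hcxy]
      exact mem_singleton _
  · -- values with ⊤ in second / ⊥ in first position
    intro s hs
    constructor
    · -- impK c x ⊤ = {s}
      have hub : ∀ m : P, upperBounds ({c x, ⊥, x} : Set P) = upperBounds ({x, c x} : Set P) := by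
        intro m
        ext w
        simp only [mem_ub_triple, mem_ub_pair]
        exact ⟨fun ⟨h1, _, h3⟩ => ⟨h3, h1⟩, fun ⟨h3, h1⟩ => ⟨h1, bot_le, h3⟩⟩
      ext z
      simp only [impK, mem_setOf_eq, mem_singleton_iff]
      constructor
      · rintro ⟨a, ha, b, hb, u, hu, m, hm, hz⟩
        rw [Set.pair_comm, maxE_lb_pair le_top, mem_singleton_iff] at ha
        subst ha
        rw [ainv_c_top hinv, maxE_lb_pair bot_le, mem_singleton_iff] at hb
        subst hb
        rw [Set.pair_comm, minE_ub_pair le_top, mem_singleton_iff] at hu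
        subst u
        have hmx : m = x := hm.unique (isGLB_pair_left le_top)
        subst m
        exact ((isLUB_congr' (hub x)).mp hz).unique hs
      · rintro rfl
        refine ⟨c x, ?_, ⊥, ?_, ⊤, ?_, x, isGLB_pair_left le_top,
          (isLUB_congr' (hub x)).mpr hs⟩
        · rw [Set.pair_comm, maxE_lb_pair le_top]; exact mem_singleton _
        · rw [ainv_c_top hinv, maxE_lb_pair bot_le]; exact mem_singleton _
        · rw [Set.pair_comm, minE_ub_pair le_top]; exact mem_singleton _
    · -- impK c ⊥ x = {s}
      ext z
      simp only [impK, mem_setOf_eq, mem_singleton_iff, ainv_c_bot hinv]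
      constructor
      · rintro ⟨a, ha, b, hb, u, hu, m, hm, hz⟩
        rw [maxE_lb_pair le_top, mem_singleton_iff] at ha
        subst a
        rw [maxE_lb_pair le_top, mem_singleton_iff] at hb
        subst hb
        have hmb : m = ⊥ := hm.unique (isGLB_pair_left bot_le)
        subst hmb
        exact ((isLUB_congr' (ub_triple_last_le bot_le)).mp hz).unique hs
      · rintro rfl
        refine ⟨x, ?_, c x, ?_, ⊤, ?_, ⊥, isGLB_pair_left bot_le,
          (isLUB_congr' (ub_triple_last_le bot_le)).mpr hs⟩
        · rw [maxE_lb_pair le_top]; exact mem_singleton _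
        · rw [maxE_lb_pair le_top]; exact mem_singleton _
        · rw [minE_ub_pair le_top]; exact mem_singleton _
  · -- impK c ⊤ x = {x}
    have hlubx : IsLUB ({⊥, ⊥, x} : Set P) x :=
      ⟨mem_ub_triple.mpr ⟨bot_le, bot_le, le_rfl⟩, fun w hw => (mem_ub_triple.mp hw).2.2⟩
    ext z
    simp only [impK, mem_setOf_eq, mem_singleton_iff, ainv_c_top hinv]
    constructor
    · rintro ⟨a, ha, b, hb, u, hu, m, hm, hz⟩
      rw [Set.pair_comm, maxE_lb_pair bot_le, mem_singleton_iff] at ha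
      subst ha
      rw [Set.pair_comm, maxE_lb_pair bot_le, mem_singleton_iff] at hb
      subst hb
      rw [Set.pair_comm, minE_ub_pair bot_le, mem_singleton_iff] at hu
      subst u
      have hmx : m = x := by
        rw [Set.pair_comm] at hm
        exact hm.unique (isGLB_pair_left le_top)
      subst m
      exact hz.unique hlubx
    · intro hzx
      subst z
      refine ⟨⊥, ?_, ⊥, ?_, x, ?_, x, ?_, hlubx⟩
      · rw [Set.pair_comm, maxE_lb_pair bot_le]; exact mem_singleton _
      · rw [Set.pair_comm, maxE_lb_pair bot_le]; exact mem_singleton _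
      · rw [Set.pair_comm, minE_ub_pair bot_le]; exact mem_singleton _
      · rw [Set.pair_comm]; exact isGLB_pair_left le_top
  · -- impK c x ⊥ = {c x}
    have hlubcx : ∀ m : P, m ≤ c x → IsLUB ({⊥, c x, m} : Set P) (c x) := fun m hm =>
      ⟨mem_ub_triple.mpr ⟨bot_le, le_rfl, hm⟩, fun w hw => (mem_ub_triple.mp hw).2.1⟩
    ext z
    simp only [impK, mem_setOf_eq, mem_singleton_iff, ainv_c_bot hinv]
    constructor
    · rintro ⟨a, ha, b, hb, u, hu, m, hm, hz⟩
      rw [maxE_lb_pair bot_le, mem_singleton_iff] at ha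
      subst ha
      rw [Set.pair_comm, maxE_lb_pair le_top, mem_singleton_iff] at hb
      subst hb
      rw [minE_ub_pair bot_le, mem_singleton_iff] at hu
      subst hu
      exact hz.unique (hlubcx m (mem_lb_pair.mp hm.1).2)
    · rintro rfl
      obtain ⟨m, hm⟩ := exists_isGLB_self_compl hinv horth x
      refine ⟨⊥, ?_, c x, ?_, c x, ?_, m, hm, hlubcx m (mem_lb_pair.mp hm.1).2⟩
      · rw [maxE_lb_pair bot_le]; exact mem_singleton _
      · rw [Set.pair_comm, maxE_lb_pair le_top]; exact mem_singleton _
      · rw [minE_ub_pair bot_le]; exact mem_singleton _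
end

section
/- An orthogonal lub-complete poset P is orthocomplemented if and only if for all x, y ∈ P, x ≤ y implies x →_K y = {1}, and also if and only if x ≤ y implies x →_N y = {1}, where x →_N y := y' →_K x'. -/
open Set

variable {P : Type*} [PartialOrder P] [BoundedOrder P]

section Aux

variable {c : P → P}

lemma maxE_Iic (a : P) : MaxE (Iic a) = ({a} : Set P) := by
  ext m
  constructor
  · rintro ⟨hm, hmax⟩
    exact (hmax a le_rfl hm).symm
  · rintro rfl
    exact ⟨le_rfl, fun x hx hax => le_antisymm hx hax⟩

lemma minE_Ici (a : P) : MinE (Ici a) = ({a} : Set P) := by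
  ext m
  constructor
  · rintro ⟨hm, hmin⟩
    exact (hmin a le_rfl hm).symm
  · rintro rfl
    exact ⟨le_rfl, fun x hx hax => le_antisymm hax hx⟩

lemma lb_pair_of_le {a b : P} (h : b ≤ a) : lowerBounds ({a, b} : Set P) = Iic b := by
  ext z
  simp only [lowerBounds, Set.mem_setOf_eq, Set.mem_insert_iff, Set.mem_singleton_iff,
    Set.mem_Iic]
  constructor
  · intro hz; exact hz (Or.inr rfl)
  · rintro hz w (rfl | rfl)
    · exact hz.trans h
    · exact hz

lemma ub_pair_of_le {a b : P} (h : a ≤ b) : upperBounds ({a, b} : Set P) = Ici b := by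
  ext z
  simp only [upperBounds, Set.mem_setOf_eq, Set.mem_insert_iff, Set.mem_singleton_iff,
    Set.mem_Ici]
  constructor
  · intro hz; exact hz (Or.inr rfl)
  · rintro hz w (rfl | rfl)
    · exact h.trans hz
    · exact hz

lemma c_top (hinv : HasAntitoneInvol c) : c ⊤ = ⊥ := by
  have h := hinv.1 (c ⊥) ⊤ le_top
  rw [hinv.2] at h
  exact le_antisymm h bot_le

lemma c_bot (hinv : HasAntitoneInvol c) : c ⊥ = ⊤ := by
  rw [← c_top hinv, hinv.2]

lemma lb_pair_of_le' {a b : P} (h : a ≤ b) : lowerBounds ({a, b} : Set P) = Iic a := by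
  rw [Set.pair_comm]; exact lb_pair_of_le h

/-- If `z ≤ a` and `z ≤ c a` in an orthocomplemented poset, then `z = ⊥`. -/
lemma eq_bot_of_le_both (hinv : HasAntitoneInvol c) (hoc : IsOrthocomplemented c)
    {a z : P} (h1 : z ≤ a) (h2 : z ≤ c a) : z = ⊥ := by
  have ha : c a ≤ c z := hinv.1 _ _ h1
  have hb : a ≤ c z := by
    have := hinv.1 _ _ h2; rwa [hinv.2] at this
  have hub : c z ∈ upperBounds ({a, c a} : Set P) := by
    rintro w (rfl | rfl)
    · exact hb
    · exact ha
  have htop : (⊤ : P) ≤ c z := (hoc a).2 hub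
  have hcz : c z = ⊤ := le_antisymm le_top htop
  have : z = c (c z) := (hinv.2 z).symm
  rw [this, hcz, c_top hinv]

/-- Key lemma: if `x ≤ y` and `a` is a maximal lower bound of `{c x, y}`,
then the only upper bound of `{a, c y, x}` is `⊤`. -/
lemma key_ub (hinv : HasAntitoneInvol c) (horth : IsOrthogonalPoset c)
    (hoc : IsOrthocomplemented c) {x y a : P} (_hxy : x ≤ y)
    (ha : a ∈ MaxE (lowerBounds ({c x, y} : Set P))) :
    upperBounds ({a, c y, x} : Set P) = {⊤} := by
  obtain ⟨haL, hamax⟩ := ha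
  have hacx : a ≤ c x := haL (Or.inl rfl)
  have hay : a ≤ y := haL (Or.inr rfl)
  ext w
  constructor
  · intro hw
    have hwa : a ≤ w := hw (Or.inl rfl)
    have hwcy : c y ≤ w := hw (Or.inr (Or.inl rfl))
    have hwx : x ≤ w := hw (Or.inr (Or.inr rfl))
    -- c w ≤ c a, c w ≤ y, c w ≤ c x
    have h1 : c w ≤ c a := hinv.1 _ _ hwa
    have h2 : c w ≤ y := by
      have := hinv.1 _ _ hwcy; rwa [hinv.2] at this
    have h3 : c w ≤ c x := hinv.1 _ _ hwx
    -- the join of c w and a exists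
    obtain ⟨s, hs⟩ := horth (c w) a h1
    have hscw : c w ≤ s := hs.1 (Or.inl rfl)
    have hsa : a ≤ s := hs.1 (Or.inr rfl)
    have hsL : s ∈ lowerBounds ({c x, y} : Set P) := by
      rintro v (rfl | rfl)
      · exact hs.2 (by rintro v' (rfl | rfl); exacts [h3, hacx])
      · exact hs.2 (by rintro v' (rfl | rfl); exacts [h2, hay])
    have hsa' : s = a := hamax s hsL hsa
    have hcwa : c w ≤ a := hsa' ▸ hscw
    have hcwbot : c w = ⊥ := eq_bot_of_le_both hinv hoc hcwa h1
    have : w = c (c w) := (hinv.2 w).symm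
    rw [this, hcwbot, c_bot hinv]
    rfl
  · rintro rfl
    rintro v (rfl | rfl | rfl) <;> exact le_top

/-- Forward direction: orthocomplemented implies `x ≤ y → impK c x y = {⊤}`. -/
lemma impK_eq_top (hinv : HasAntitoneInvol c) (horth : IsOrthogonalPoset c)
    (hlub : IsLubComplete (P := P)) (hoc : IsOrthocomplemented c)
    {x y : P} (hxy : x ≤ y) : impK c x y = {(⊤ : P)} := by
  have hcyx : c y ≤ c x := hinv.1 _ _ hxy
  have hbset : MaxE (lowerBounds ({c x, c y} : Set P)) = {c y} := by
    rw [lb_pair_of_le hcyx, maxE_Iic]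
  ext z
  constructor
  · rintro ⟨a, ha, b, hb, u, hu, m, hm, hz⟩
    have hb' : b = c y := by rwa [hbset] at hb
    have hyu : y ≤ u := hu.1 (Or.inr rfl)
    have hxu : x ≤ u := hxy.trans hyu
    have hm' : m = x := by
      have : IsGLB ({x, u} : Set P) x :=
        ⟨by rintro v (rfl | rfl); exacts [le_rfl, hxu],
         fun v hv => hv (Or.inl rfl)⟩
      exact hm.unique this
    rw [hb', hm'] at hz
    have hzub : z ∈ upperBounds ({a, c y, x} : Set P) := hz.1
    rw [key_ub hinv horth hoc hxy ha] at hzub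
    exact hzub
  · rintro rfl
    -- construct the witnesses
    obtain ⟨a, ha, _⟩ := hlub.1 ({c x, y} : Set P) (Set.toFinite _) ⊥
      (by rintro v (rfl | rfl) <;> exact bot_le)
    obtain ⟨u, hu, _⟩ := hlub.2 ({c x, y} : Set P) (Set.toFinite _) ⊤
      (by rintro v (rfl | rfl) <;> exact le_top)
    refine ⟨a, ha, c y, by rw [hbset]; rfl, u, hu, x, ?_, ?_⟩
    · have hyu : y ≤ u := hu.1 (Or.inr rfl)
      exact ⟨by rintro v (rfl | rfl); exacts [le_rfl, hxy.trans hyu],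
        fun v hv => hv (Or.inl rfl)⟩
    · constructor
      · rintro v (rfl | rfl | rfl) <;> exact le_top
      · intro w hw
        have := key_ub hinv horth hoc hxy ha
        rw [this] at hw
        exact hw.ge
/-- Backward core: if `impK c x ⊤ = {⊤}` then `x ∨ c x = ⊤`. -/
lemma isLUB_of_impK_top (hinv : HasAntitoneInvol c) {x : P}
    (h : impK c x ⊤ = {(⊤ : P)}) : IsLUB ({x, c x} : Set P) ⊤ := by
  have htop : (⊤ : P) ∈ impK c x ⊤ := by rw [h]; rfl
  obtain ⟨a, ha, b, hb, u, hu, m, hm, hz⟩ := htop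
  have ha' : a = c x := by
    have : MaxE (lowerBounds ({c x, ⊤} : Set P)) = {c x} := by
      rw [lb_pair_of_le' le_top, maxE_Iic]
    rwa [this] at ha
  have hb' : b = ⊥ := by
    have : MaxE (lowerBounds ({c x, c ⊤} : Set P)) = {⊥} := by
      rw [c_top hinv, lb_pair_of_le bot_le, maxE_Iic]
    rwa [this] at hb
  have hm' : m = x := by
    have hxu : x ≤ u := (hu.1 (Or.inr rfl)).trans' le_top
    exact hm.unique ⟨by rintro v (rfl | rfl); exacts [le_rfl, hxu],
      fun v hv => hv (Or.inl rfl)⟩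
  rw [ha', hb', hm'] at hz
  constructor
  · rintro v (rfl | rfl) <;> exact le_top
  · intro w hw
    refine hz.2 ?_
    rintro v (rfl | rfl | rfl)
    · exact hw (Or.inr rfl)
    · exact bot_le
    · exact hw (Or.inl rfl)

end Aux

/-- orthocomplemented iff x ≤ y implies x →_K y = {1}, iff x ≤ y implies x →_N y = {1}. -/
theorem stmt11 (c : P → P) (hinv : HasAntitoneInvol c) (horth : IsOrthogonalPoset c)
    (hlub : IsLubComplete (P := P)) :
    (IsOrthocomplemented c ↔ ∀ x y : P, x ≤ y → impK c x y = {(⊤ : P)}) ∧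
    (IsOrthocomplemented c ↔ ∀ x y : P, x ≤ y → impN c x y = {(⊤ : P)}) := by
  constructor
  · constructor
    · intro hoc x y hxy
      exact impK_eq_top hinv horth hlub hoc hxy
    · intro h x
      exact isLUB_of_impK_top hinv (h x ⊤ le_top)
  · constructor
    · intro hoc x y hxy
      exact impK_eq_top hinv horth hlub hoc (hinv.1 _ _ hxy)
    · intro h x
      have h0 : impN c ⊥ (c x) = {(⊤ : P)} := h ⊥ (c x) bot_le
      unfold impN at h0
      rw [hinv.2, c_bot hinv] at h0
      exact isLUB_of_impK_top hinv h0
end
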